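/- Let L be a k-bounded-oscillation language with a grammar G in Chomsky normal form with nonterminal set N. Then the rational index of L satisfies ρ_L(n) = O(|N|^{2k} · n^{4k}). -/

import Mathlib

/-- A context-free grammar in Chomsky normal form (ignoring the rule `S → ε`):
rules are `A → BC` and `A → a`. -/
structure CNF (T N : Type) where
  start : N
  binRule : N → N → N → Prop   -- A → B C
  termRule : N → T → Prop      -- A → a

/-- Parse trees of a grammar in Chomsky normal form. -/
inductive DTree (T N : Type) where
  | leaf : N → T → DTree T N
  | node : N → DTree T N → DTree T N → DTree T N

namespace DTree

variable {T N : Type}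

/-- Nonterminal at the root. -/
def rootN : DTree T N → N
  | leaf A _ => A
  | node A _ _ => A

/-- The terminal word at the leaves. -/
def yield : DTree T N → List T
  | leaf _ a => [a]
  | node _ l r => yield l ++ yield r

/-- Height: number of edges on a longest root-to-leaf path. -/
def height : DTree T N → ℕ
  | leaf _ _ => 0
  | node _ l r => max (height l) (height r) + 1

/-- Dimension: leaves have dimension 0; an internal node has the maximum of its
children's dimensions if uniquely attained, else that maximum plus one. -/
def dim : DTree T N → ℕ
  | leaf _ _ => 0
  | node _ l r => if dim l = dim r then dim l + 1 else max (dim l) (dim r)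

/-- A tree is a valid parse tree with respect to the grammar `g`. -/
def wf (g : CNF T N) : DTree T N → Prop
  | leaf A a => g.termRule A a
  | node A l r => g.binRule A (rootN l) (rootN r) ∧ wf g l ∧ wf g r

end DTree

/-- `A` derives the terminal word `w` in `g`. -/
def CNF.Derives (g : CNF T N) (A : N) (w : List T) : Prop :=
  ∃ t : DTree T N, t.wf g ∧ t.rootN = A ∧ t.yield = w

/-- The language generated by the grammar. -/
def CNF.Lang (g : CNF T N) : Set (List T) := {w | g.Derives g.start w}

/-- `GWord δ i w j`: there is a path from state `i` to state `j` labeled by `w`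
in the labeled transition relation `δ`. -/
def GWord {Q T : Type} (δ : Q → T → Q → Prop) : Q → List T → Q → Prop
  | i, [], j => i = j
  | i, a :: w, j => ∃ k, δ i a k ∧ GWord δ k w j

/-- Acceptance by an NFA given by transition relation `δ`, initial states `I`
and final states `F`. -/
def NfaLang {Q T : Type} (δ : Q → T → Q → Prop) (I F : Set Q) : Set (List T) :=
  {w | ∃ i ∈ I, ∃ j ∈ F, GWord δ i w j}

/-- Words over `{ā, a}`: `true` is a push `ā`, `false` is a pop `a`. -/
abbrev WWord := List Bool

/-- A word is balanced (well-nested). -/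
def WBalanced (w : WWord) : Prop :=
  w.count true = w.count false ∧
    ∀ p : WWord, p <+: w → p.count false ≤ p.count true

/-- One step of removing a matching pair `ā … a` (the part between a matching
`ā` and `a` is balanced). -/
def DelStep (u v : WWord) : Prop :=
  ∃ x y z : WWord, u = x ++ [true] ++ y ++ [false] ++ z ∧ WBalanced y ∧
    v = x ++ y ++ z

/-- Harmonics: `h 0 = ε`, `h (i+1) = ā (h i) a ā (h i) a`. -/
def wharmonic : ℕ → WWord
  | 0 => []
  | i + 1 => [true] ++ wharmonic i ++ [false] ++ [true] ++ wharmonic i ++ [false]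

namespace DTree

/-- The well-nested word of a parse-tree node, following Ganty and Valput:
`α(n) = a ā^k α(n₁) … α(n_k)` for a node with `k` children (a terminal leaf
contributes `a`). -/
def alphaNode {T N : Type} : DTree T N → WWord
  | leaf _ _ => [false, true, false]
  | node _ l r => [false, true, true] ++ alphaNode l ++ alphaNode r

/-- The well-nested word `α(t)` of a parse tree: `α(t) = ā α(root)`. -/
def alpha {T N : Type} (t : DTree T N) : WWord := true :: t.alphaNode

/-- The oscillation of a parse tree is at most `k`: every wharmonic obtainable
from `α(t)` by removing zero or more matching pairs has order at most `k`. -/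
def OscLe {T N : Type} (t : DTree T N) (k : ℕ) : Prop :=
  ∀ m : ℕ, Relation.ReflTransGen DelStep t.alpha (wharmonic m) → m ≤ k

end DTree

section WordLemmas

open List

lemma wbal_nil : WBalanced [] := ⟨rfl, fun p hp => by simp [List.prefix_nil.mp hp]⟩

lemma prefix_append_cases {α : Type*} {p x y : List α} (h : p <+: x ++ y) :
    p <+: x ∨ ∃ q, q <+: y ∧ p = x ++ q := by
  induction x generalizing p with
  | nil => exact Or.inr ⟨p, by simpa using h, by simp⟩
  | cons a x ih =>
    cases p with
    | nil => exact Or.inl (nil_prefix)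
    | cons b p =>
      rw [cons_append, cons_prefix_cons] at h
      obtain ⟨rfl, h⟩ := h
      rcases ih h with h' | ⟨q, hq, rfl⟩
      · exact Or.inl (cons_prefix_cons.mpr ⟨rfl, h'⟩)
      · exact Or.inr ⟨q, hq, rfl⟩

lemma wbal_append {x y : WWord} (hx : WBalanced x) (hy : WBalanced y) :
    WBalanced (x ++ y) := by
  refine ⟨by simp [hx.1, hy.1], fun p hp => ?_⟩
  rcases prefix_append_cases hp with h | ⟨q, hq, rfl⟩
  · exact hx.2 p h
  · have := hy.2 q hq
    simp only [count_append, hx.1]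
    omega

lemma wbal_wrap {w : WWord} (h : WBalanced w) :
    WBalanced ([true] ++ w ++ [false]) := by
  refine ⟨by simp [h.1], fun p hp => ?_⟩
  cases p with
  | nil => simp
  | cons b p =>
    rw [show ([true] ++ w ++ [false] : WWord) = true :: (w ++ [false]) by simp,
      cons_prefix_cons] at hp
    obtain ⟨rfl, hp⟩ := hp
    rcases prefix_append_cases hp with h' | ⟨q, hq, rfl⟩
    · have := h.2 p h'
      simp only [count_cons, beq_iff_eq]
      simp
      omega
    · have h1 := h.1
      have hq' : q.count false ≤ 1 ∧ q.count true ≤ 1 := by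
        have : q = [] ∨ q = [false] := by
          cases q with
          | nil => exact Or.inl rfl
          | cons c q =>
            rw [cons_prefix_cons] at hq
            obtain ⟨rfl, hq⟩ := hq
            simp [List.prefix_nil.mp hq]
        rcases this with rfl | rfl <;> simp
      simp only [count_cons, count_append, beq_iff_eq]
      simp
      omega

lemma wbal_harm (m : ℕ) : WBalanced (wharmonic m) := by
  induction m with
  | zero => exact wbal_nil
  | succ m ih =>
    have : wharmonic (m+1) =
        ([true] ++ wharmonic m ++ [false]) ++ ([true] ++ wharmonic m ++ [false]) := by
      simp [wharmonic]
    rw [this]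
    exact wbal_append (wbal_wrap ih) (wbal_wrap ih)

/-- Reduction relation. -/
abbrev WRed : WWord → WWord → Prop := Relation.ReflTransGen DelStep

lemma del_pair (x z : WWord) {y : WWord} (hy : WBalanced y) :
    DelStep (x ++ [true] ++ y ++ [false] ++ z) (x ++ y ++ z) :=
  ⟨x, y, z, rfl, hy, rfl⟩

lemma DelStep.context {u v : WWord} (p s : WWord) (h : DelStep u v) :
    DelStep (p ++ u ++ s) (p ++ v ++ s) := by
  obtain ⟨x, y, z, rfl, hy, rfl⟩ := h
  exact ⟨p ++ x, y, z ++ s, by simp, hy, by simp⟩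

lemma WRed.context {u v : WWord} (p s : WWord) (h : WRed u v) :
    WRed (p ++ u ++ s) (p ++ v ++ s) :=
  Relation.ReflTransGen.lift (fun w => p ++ w ++ s)
    (fun _ _ h => DelStep.context p s h) _ _ h

lemma WRed.append {u u' v v' : WWord} (h1 : WRed u u') (h2 : WRed v v') :
    WRed (u ++ v) (u' ++ v') := by
  have a1 : WRed (u ++ v) (u' ++ v) := by simpa using h1.context [] v
  have a2 : WRed (u' ++ v) (u' ++ v') := by simpa using h2.context u' []
  exact a1.trans a2

lemma wred_block_nil {w : WWord} (h : WRed w []) :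
    WRed ([true] ++ w ++ [false]) [] := by
  have a1 : WRed ([true] ++ w ++ [false]) ([true] ++ [] ++ [false]) :=
    WRed.context [true] [false] h
  refine a1.trans (Relation.ReflTransGen.single ?_)
  simpa using del_pair [] [] wbal_nil

lemma wred_harm_nil (m : ℕ) : WRed (wharmonic m) [] := by
  induction m with
  | zero => exact Relation.ReflTransGen.refl
  | succ m ih =>
    have : wharmonic (m+1) =
        ([true] ++ wharmonic m ++ [false]) ++ ([true] ++ wharmonic m ++ [false]) := by
      simp [wharmonic]
    rw [this]
    simpa using WRed.append (wred_block_nil ih) (wred_block_nil ih)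

lemma wred_harm_succ (m : ℕ) : WRed (wharmonic (m+1)) (wharmonic m) := by
  have : wharmonic (m+1) =
      ([true] ++ wharmonic m ++ [false]) ++ ([true] ++ wharmonic m ++ [false]) := by
    simp [wharmonic]
  rw [this]
  have a1 : WRed (([true] ++ wharmonic m ++ [false]) ++ ([true] ++ wharmonic m ++ [false]))
      ([] ++ ([true] ++ wharmonic m ++ [false])) :=
    WRed.append (wred_block_nil (wred_harm_nil m)) Relation.ReflTransGen.refl
  refine a1.trans (Relation.ReflTransGen.single ?_)
  simpa using del_pair [] [] (wbal_harm m)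

lemma wred_harm_le {m' m : ℕ} (h : m' ≤ m) : WRed (wharmonic m) (wharmonic m') := by
  induction h with
  | refl => exact Relation.ReflTransGen.refl
  | step h ih => exact (wred_harm_succ _).trans ih

end WordLemmas
section TreeOsc

open DTree List

variable {T N : Type}

/-- `alphaNode t` reduces to `a · h_m`. -/
def QP (t : DTree T N) (m : ℕ) : Prop :=
  WRed t.alphaNode (false :: wharmonic m)

/-- `alphaNode t` reduces to `a ā · h_m · a`. -/
def RP (t : DTree T N) (m : ℕ) : Prop :=
  WRed t.alphaNode ([false, true] ++ wharmonic m ++ [false])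

lemma QP.mono {t : DTree T N} {m m' : ℕ} (h : QP t m) (hle : m' ≤ m) : QP t m' := by
  refine h.trans ?_
  simpa using (wred_harm_le hle).context [false] []

lemma RP.mono {t : DTree T N} {m m' : ℕ} (h : RP t m) (hle : m' ≤ m) : RP t m' := by
  refine h.trans ?_
  simpa using (wred_harm_le hle).context [false, true] [false]

lemma QP_zero : ∀ t : DTree T N, QP t 0 := by
  intro t
  induction t with
  | leaf A a =>
    refine Relation.ReflTransGen.single ?_
    simpa [DTree.alphaNode, wharmonic] using del_pair [false] [] wbal_nil
  | node A l r ihl ihr =>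
    have h1 : WRed (DTree.node A l r).alphaNode
        (([false, true, true] ++ [false]) ++ [false]) := by
      simpa [DTree.alphaNode, wharmonic] using
        (WRed.append (WRed.append (Relation.ReflTransGen.refl) ihl) ihr :
          WRed (([false, true, true] ++ l.alphaNode) ++ r.alphaNode) _)
    have s1 : DelStep ([false, true, true] ++ [false] ++ [false])
        [false, true, false] := by
      simpa using del_pair [false, true] [false] wbal_nil
    have s2 : DelStep [false, true, false] (false :: wharmonic 0) := by
      simpa [wharmonic] using del_pair [false] [] wbal_nil
    exact h1.trans ((Relation.ReflTransGen.single s1).trans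
      (Relation.ReflTransGen.single s2))

lemma QP_left {A : N} {l r : DTree T N} {m : ℕ} (hl : QP l m) :
    QP (DTree.node A l r) m := by
  have h1 : WRed (DTree.node A l r).alphaNode
      (([false, true, true] ++ (false :: wharmonic m)) ++ [false]) := by
    simpa [DTree.alphaNode, wharmonic] using
      (WRed.append (WRed.append (Relation.ReflTransGen.refl) hl) (QP_zero r) :
        WRed (([false, true, true] ++ l.alphaNode) ++ r.alphaNode) _)
  have s1 : DelStep (([false, true, true] ++ (false :: wharmonic m)) ++ [false])
      ([false, true] ++ wharmonic m ++ [false]) := by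
    simpa using del_pair [false, true] (wharmonic m ++ [false]) wbal_nil
  have s2 : DelStep ([false, true] ++ wharmonic m ++ [false]) (false :: wharmonic m) := by
    simpa using del_pair [false] [] (wbal_harm m)
  exact h1.trans ((Relation.ReflTransGen.single s1).trans
    (Relation.ReflTransGen.single s2))

lemma QP_right {A : N} {l r : DTree T N} {m : ℕ} (hr : QP r m) :
    QP (DTree.node A l r) m := by
  have h1 : WRed (DTree.node A l r).alphaNode
      (([false, true, true] ++ [false]) ++ (false :: wharmonic m)) := by
    simpa [DTree.alphaNode, wharmonic] using
      (WRed.append (WRed.append (Relation.ReflTransGen.refl) (QP_zero l)) hr :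
        WRed (([false, true, true] ++ l.alphaNode) ++ r.alphaNode) _)
  have s1 : DelStep (([false, true, true] ++ [false]) ++ (false :: wharmonic m))
      ([false, true, false] ++ wharmonic m) := by
    simpa using del_pair [false, true] ([false] ++ wharmonic m) wbal_nil
  have s2 : DelStep ([false, true, false] ++ wharmonic m) (false :: wharmonic m) := by
    simpa using del_pair [false] (wharmonic m) wbal_nil
  exact h1.trans ((Relation.ReflTransGen.single s1).trans
    (Relation.ReflTransGen.single s2))

lemma QP_comb {A : N} {l r : DTree T N} {m : ℕ} (hl : QP l m) (hr : RP r m) :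
    QP (DTree.node A l r) (m + 1) := by
  have h1 : WRed (DTree.node A l r).alphaNode
      (([false, true, true] ++ (false :: wharmonic m)) ++
        ([false, true] ++ wharmonic m ++ [false])) := by
    simpa [DTree.alphaNode] using
      (WRed.append (WRed.append (Relation.ReflTransGen.refl) hl) hr :
        WRed (([false, true, true] ++ l.alphaNode) ++ r.alphaNode) _)
  refine h1.trans (Relation.ReflTransGen.single ?_)
  simpa [wharmonic] using del_pair [false, true]
    (wharmonic m ++ [false, true] ++ wharmonic m ++ [false]) wbal_nil

lemma RP_left {A : N} {l r : DTree T N} {m : ℕ} (hl : RP l m) :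
    RP (DTree.node A l r) m := by
  have h1 : WRed (DTree.node A l r).alphaNode
      (([false, true, true] ++ ([false, true] ++ wharmonic m ++ [false])) ++ [false]) := by
    simpa [DTree.alphaNode, wharmonic] using
      (WRed.append (WRed.append (Relation.ReflTransGen.refl) hl) (QP_zero r) :
        WRed (([false, true, true] ++ l.alphaNode) ++ r.alphaNode) _)
  have s1 : DelStep (([false, true, true] ++ ([false, true] ++ wharmonic m ++ [false])) ++ [false])
      ([false, true, true] ++ wharmonic m ++ [false, false]) := by
    simpa using del_pair [false, true] ([true] ++ wharmonic m ++ [false, false]) wbal_nil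
  have s2 : DelStep ([false, true, true] ++ wharmonic m ++ [false, false])
      ([false, true] ++ wharmonic m ++ [false]) := by
    simpa using del_pair [false, true] [false] (wbal_harm m)
  exact h1.trans ((Relation.ReflTransGen.single s1).trans
    (Relation.ReflTransGen.single s2))

lemma RP_from_left {A : N} {l r : DTree T N} {m : ℕ} (hl : QP l m) :
    RP (DTree.node A l r) m := by
  have h1 : WRed (DTree.node A l r).alphaNode
      (([false, true, true] ++ (false :: wharmonic m)) ++ [false]) := by
    simpa [DTree.alphaNode, wharmonic] using
      (WRed.append (WRed.append (Relation.ReflTransGen.refl) hl) (QP_zero r) :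
        WRed (([false, true, true] ++ l.alphaNode) ++ r.alphaNode) _)
  refine h1.trans (Relation.ReflTransGen.single ?_)
  simpa using del_pair [false, true] (wharmonic m ++ [false]) wbal_nil

lemma RP_right {A : N} {l r : DTree T N} {m : ℕ} (hr : RP r m) :
    RP (DTree.node A l r) m := by
  have h1 : WRed (DTree.node A l r).alphaNode
      (([false, true, true] ++ [false]) ++ ([false, true] ++ wharmonic m ++ [false])) := by
    simpa [DTree.alphaNode, wharmonic] using
      (WRed.append (WRed.append (Relation.ReflTransGen.refl) (QP_zero l)) hr :
        WRed (([false, true, true] ++ l.alphaNode) ++ r.alphaNode) _)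
  have s1 : DelStep (([false, true, true] ++ [false]) ++ ([false, true] ++ wharmonic m ++ [false]))
      ([false, true, false, true] ++ wharmonic m ++ [false]) := by
    simpa using del_pair [false, true] ([false, true] ++ wharmonic m ++ [false]) wbal_nil
  have s2 : DelStep ([false, true, false, true] ++ wharmonic m ++ [false])
      ([false, true] ++ wharmonic m ++ [false]) := by
    simpa using del_pair [false] ([true] ++ wharmonic m ++ [false]) wbal_nil
  exact h1.trans ((Relation.ReflTransGen.single s1).trans
    (Relation.ReflTransGen.single s2))

lemma exists_qp_rp (t : DTree T N) :
    ∃ p q : ℕ, QP t p ∧ RP t q ∧ t.dim ≤ 2 * p ∧ t.dim ≤ 2 * q + 1 := by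
  induction t with
  | leaf A a =>
    refine ⟨0, 0, QP_zero _, ?_, by simp [DTree.dim], by simp [DTree.dim]⟩
    exact Relation.ReflTransGen.refl
  | node A l r ihl ihr =>
    obtain ⟨p1, q1, hQ1, hR1, hd1, hd1'⟩ := ihl
    obtain ⟨p2, q2, hQ2, hR2, hd2, hd2'⟩ := ihr
    rcases Nat.lt_trichotomy l.dim r.dim with hlt | heq | hgt
    · refine ⟨p2, q2, QP_right hQ2, RP_right hR2, ?_, ?_⟩ <;>
        · simp only [DTree.dim]
          rw [if_neg (by omega)]
          omega
    · refine ⟨min p1 q2 + 1, p1, QP_comb (hQ1.mono (min_le_left _ _))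
        (hR2.mono (min_le_right _ _)), RP_from_left hQ1, ?_, ?_⟩ <;>
        · simp only [DTree.dim]
          rw [if_pos heq]
          omega
    · refine ⟨p1, q1, QP_left hQ1, RP_left hR1, ?_, ?_⟩ <;>
        · simp only [DTree.dim]
          rw [if_neg (by omega)]
          omega

lemma dim_le_of_oscLe {t : DTree T N} {k : ℕ} (h : t.OscLe k) : t.dim ≤ 2 * k := by
  obtain ⟨p, q, hQ, _, hd, _⟩ := exists_qp_rp t
  have halpha : WRed t.alpha (wharmonic p) := by
    have h1 : WRed t.alpha ([true] ++ (false :: wharmonic p)) := by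
      simpa [DTree.alpha] using hQ.context [true] []
    refine h1.trans (Relation.ReflTransGen.single ?_)
    simpa using del_pair [] (wharmonic p) wbal_nil
  have := h p halpha
  omega

end TreeOsc
section Trees

open DTree

variable {T N N' : Type}

def tsize : DTree T N → ℕ
  | .leaf _ _ => 1
  | .node _ l r => tsize l + tsize r + 1

def mapN (f : N → N') : DTree T N → DTree T N'
  | .leaf A a => .leaf (f A) a
  | .node A l r => .node (f A) (mapN f l) (mapN f r)

@[simp] lemma rootN_mapN (f : N → N') (t : DTree T N) :
    (mapN f t).rootN = f t.rootN := by
  cases t <;> simp [mapN, DTree.rootN]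

@[simp] lemma yield_mapN (f : N → N') (t : DTree T N) :
    (mapN f t).yield = t.yield := by
  induction t with
  | leaf A a => simp [mapN, DTree.yield]
  | node A l r ihl ihr => simp [mapN, DTree.yield, ihl, ihr]

@[simp] lemma dim_mapN (f : N → N') (t : DTree T N) :
    (mapN f t).dim = t.dim := by
  induction t with
  | leaf A a => simp [mapN, DTree.dim]
  | node A l r ihl ihr => simp [mapN, DTree.dim, ihl, ihr]

lemma tsize_pos (t : DTree T N) : 1 ≤ tsize t := by
  cases t <;> simp [tsize]

lemma yield_length_pos (t : DTree T N) : 1 ≤ t.yield.length := by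
  induction t with
  | leaf A a => simp [DTree.yield]
  | node A l r ihl ihr => simp [DTree.yield]; omega

lemma yield_le_pow (t : DTree T N) :
    t.yield.length ≤ (t.height + 1) ^ t.dim := by
  induction t with
  | leaf A a => simp [DTree.yield, DTree.height, DTree.dim]
  | node A l r ihl ihr =>
    have hH : (DTree.node A l r).height = max l.height r.height + 1 := rfl
    set H : ℕ := max l.height r.height + 1 with hHdef
    have hHl : l.height + 1 ≤ H := by omega
    have hHr : r.height + 1 ≤ H := by omega
    have hl' : l.yield.length ≤ H ^ l.dim :=
      ihl.trans (Nat.pow_le_pow_left hHl _)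
    have hr' : r.yield.length ≤ H ^ r.dim :=
      ihr.trans (Nat.pow_le_pow_left hHr _)
    have hyl : (DTree.node A l r).yield.length = l.yield.length + r.yield.length := by
      simp [DTree.yield]
    rw [hyl, hH]
    by_cases hd : l.dim = r.dim
    · have hdim : (DTree.node A l r).dim = l.dim + 1 := by
        simp [DTree.dim, hd]
      rw [hdim]
      have : l.yield.length + r.yield.length ≤ 2 * H ^ l.dim := by
        rw [hd] at hl' ⊢; omega
      refine this.trans ?_
      calc 2 * H ^ l.dim ≤ (H + 1) * (H + 1) ^ l.dim :=
            Nat.mul_le_mul (by omega) (Nat.pow_le_pow_left (by omega) _)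
        _ = (H + 1) ^ (l.dim + 1) := by ring
    · have hdim : (DTree.node A l r).dim = max l.dim r.dim := by
        simp [DTree.dim, hd]
      rw [hdim]
      rcases Nat.lt_or_ge l.dim r.dim with hlt | hge
      · -- max = r.dim, l.dim ≤ r.dim - 1
        obtain ⟨e, he⟩ : ∃ e, r.dim = e + 1 := ⟨r.dim - 1, by omega⟩
        have hmax : max l.dim r.dim = e + 1 := by omega
        rw [hmax]
        have h1 : l.yield.length ≤ H ^ e :=
          hl'.trans (Nat.pow_le_pow_right (by omega) (by omega))
        have h2 : r.yield.length ≤ H ^ (e + 1) := by rw [← he]; exact hr'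
        have : H ^ (e+1) + H ^ e ≤ (H + 1) ^ (e + 1) := by
          calc H ^ (e+1) + H ^ e = H ^ e * (H + 1) := by ring
            _ ≤ (H + 1) ^ e * (H + 1) :=
              Nat.mul_le_mul_right _ (Nat.pow_le_pow_left (by omega) _)
            _ = (H + 1) ^ (e + 1) := by ring
        omega
      · have hlt : r.dim < l.dim := by omega
        obtain ⟨e, he⟩ : ∃ e, l.dim = e + 1 := ⟨l.dim - 1, by omega⟩
        have hmax : max l.dim r.dim = e + 1 := by omega
        rw [hmax]
        have h1 : r.yield.length ≤ H ^ e :=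
          hr'.trans (Nat.pow_le_pow_right (by omega) (by omega))
        have h2 : l.yield.length ≤ H ^ (e + 1) := by rw [← he]; exact hl'
        have : H ^ (e+1) + H ^ e ≤ (H + 1) ^ (e + 1) := by
          calc H ^ (e+1) + H ^ e = H ^ e * (H + 1) := by ring
            _ ≤ (H + 1) ^ e * (H + 1) :=
              Nat.mul_le_mul_right _ (Nat.pow_le_pow_left (by omega) _)
            _ = (H + 1) ^ (e + 1) := by ring
        omega

/-- TSubtree relation. -/
inductive TSub : DTree T N → DTree T N → Prop
  | refl (t : DTree T N) : TSub t t
  | left {s l r : DTree T N} (A : N) : TSub s l → TSub s (DTree.node A l r)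
  | right {s l r : DTree T N} (A : N) : TSub s r → TSub s (DTree.node A l r)

lemma TSub.wf {g : CNF T N} {s t : DTree T N} (h : TSub s t) (ht : t.wf g) : s.wf g := by
  induction h with
  | refl => exact ht
  | left A _ ih => exact ih ht.2.1
  | right A _ ih => exact ih ht.2.2

lemma TSub.tsize_le {s t : DTree T N} (h : TSub s t) : tsize s ≤ tsize t := by
  induction h with
  | refl => exact le_rfl
  | left A _ ih => simp only [tsize]; omega
  | right A _ ih => simp only [tsize]; omega

lemma TSub.yield_le {s t : DTree T N} (h : TSub s t) :
    s.yield.length ≤ t.yield.length := by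
  induction h with
  | refl => exact le_rfl
  | left A _ ih => simp only [DTree.yield, List.length_append]; omega
  | right A _ ih => simp only [DTree.yield, List.length_append]; omega

lemma sub_replace {g : CNF T N} {s t : DTree T N} (h : TSub s t) (ht : t.wf g)
    {s' : DTree T N} (hs' : s'.wf g) (hroot : s'.rootN = s.rootN) :
    ∃ t', t'.wf g ∧ t'.rootN = t.rootN ∧
      tsize t' + tsize s = tsize t + tsize s' ∧
      t'.yield.length + s.yield.length = t.yield.length + s'.yield.length := by
  induction h with
  | refl => exact ⟨s', hs', hroot, by omega, by omega⟩
  | @left l r A hsub ih =>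
    obtain ⟨l', hwf, hr, hsz, hyl⟩ := ih ht.2.1
    refine ⟨DTree.node A l' r, ⟨?_, hwf, ht.2.2⟩, rfl, ?_, ?_⟩
    · rw [hr]; exact ht.1
    · simp only [tsize]; omega
    · simp only [DTree.yield, List.length_append]; omega
  | @right l r A hsub ih =>
    obtain ⟨r', hwf, hr, hsz, hyl⟩ := ih ht.2.2
    refine ⟨DTree.node A l r', ⟨?_, ht.2.1, hwf⟩, rfl, ?_, ?_⟩
    · rw [hr]; exact ht.1
    · simp only [tsize]; omega
    · simp only [DTree.yield, List.length_append]; omega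

lemma dup_or_nodup (t : DTree T N) :
    (∃ s s' : DTree T N, TSub s t ∧ TSub s' s ∧ tsize s' < tsize s ∧ s'.rootN = s.rootN) ∨
    (∃ l : List N, l.Nodup ∧ l.length = t.height + 1 ∧
      ∀ x ∈ l, ∃ s, TSub s t ∧ s.rootN = x) := by
  induction t with
  | leaf A a =>
    exact Or.inr ⟨[A], List.nodup_singleton _, by simp [DTree.height],
      fun x hx => ⟨DTree.leaf A a, TSub.refl _, by
        simp [DTree.rootN, List.mem_singleton.mp hx]⟩⟩
  | node A l r ihl ihr =>
    by_cases hh : r.height ≤ l.height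
    · have hht : (DTree.node A l r).height = l.height + 1 := by
        simp [DTree.height]; omega
      rcases ihl with ⟨s, s', h1, h2, h3, h4⟩ | ⟨L, hnd, hlen, hmem⟩
      · exact Or.inl ⟨s, s', TSub.left A h1, h2, h3, h4⟩
      · by_cases hA : A ∈ L
        · obtain ⟨s, hs, hroot⟩ := hmem A hA
          refine Or.inl ⟨DTree.node A l r, s, TSub.refl _, TSub.left A hs, ?_, ?_⟩
          · have := hs.tsize_le
            simp only [tsize]; omega
          · simpa [DTree.rootN] using hroot
        · refine Or.inr ⟨A :: L, List.nodup_cons.mpr ⟨hA, hnd⟩, by simp [hht, hlen], ?_⟩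
          intro x hx
          rcases List.mem_cons.mp hx with rfl | hx'
          · exact ⟨DTree.node x l r, TSub.refl _, rfl⟩
          · obtain ⟨s, hs, hroot⟩ := hmem x hx'
            exact ⟨s, TSub.left A hs, hroot⟩
    · have hht : (DTree.node A l r).height = r.height + 1 := by
        simp [DTree.height]; omega
      rcases ihr with ⟨s, s', h1, h2, h3, h4⟩ | ⟨L, hnd, hlen, hmem⟩
      · exact Or.inl ⟨s, s', TSub.right A h1, h2, h3, h4⟩
      · by_cases hA : A ∈ L
        · obtain ⟨s, hs, hroot⟩ := hmem A hA
          refine Or.inl ⟨DTree.node A l r, s, TSub.refl _, TSub.right A hs, ?_, ?_⟩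
          · have := hs.tsize_le
            simp only [tsize]; omega
          · simpa [DTree.rootN] using hroot
        · refine Or.inr ⟨A :: L, List.nodup_cons.mpr ⟨hA, hnd⟩, by simp [hht, hlen], ?_⟩
          intro x hx
          rcases List.mem_cons.mp hx with rfl | hx'
          · exact ⟨DTree.node x l r, TSub.refl _, rfl⟩
          · obtain ⟨s, hs, hroot⟩ := hmem x hx'
            exact ⟨s, TSub.right A hs, hroot⟩

lemma shrink [Fintype N] (g : CNF T N) :
    ∀ n (t : DTree T N), tsize t ≤ n → t.wf g →
    ∃ t' : DTree T N, t'.wf g ∧ t'.rootN = t.rootN ∧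
      t'.yield.length ≤ t.yield.length ∧ t'.height + 1 ≤ Fintype.card N := by
  intro n
  induction n with
  | zero => intro t h _; exact absurd (tsize_pos t) (by omega)
  | succ n ih =>
    intro t hsz hwf
    by_cases hht : t.height + 1 ≤ Fintype.card N
    · exact ⟨t, hwf, rfl, le_rfl, hht⟩
    · rcases dup_or_nodup t with ⟨s, s', h1, h2, h3, h4⟩ | ⟨L, hnd, hlen, _⟩
      · have hwfs : s.wf g := h1.wf hwf
        have hwfs' : s'.wf g := h2.wf hwfs
        obtain ⟨t'', hwf'', hroot'', hsz'', hyl''⟩ := sub_replace h1 hwf hwfs' h4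
        have hyls : s'.yield.length ≤ s.yield.length := h2.yield_le
        have hlt : tsize t'' ≤ n := by omega
        obtain ⟨t', hwf', hroot', hyl', hht'⟩ := ih t'' hlt hwf''
        exact ⟨t', hwf', hroot'.trans hroot'', by omega, hht'⟩
      · exact absurd (hnd.length_le_card) (by omega)

end Trees

section Product

variable {T N Q : Type}

lemma gword_append {δ : Q → T → Q → Prop} :
    ∀ {u v : List T} {i j : Q},
      GWord δ i (u ++ v) j ↔ ∃ m, GWord δ i u m ∧ GWord δ m v j := by
  intro u
  induction u with
  | nil => intro v i j; simp [GWord]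
  | cons a u ihu =>
    intro v i j
    constructor
    · rintro ⟨kk, hk, hw⟩
      obtain ⟨m, h1, h2⟩ := ihu.mp hw
      exact ⟨m, ⟨kk, hk, h1⟩, h2⟩
    · rintro ⟨m, ⟨kk, hk, h1⟩, h2⟩
      exact ⟨kk, hk, ihu.mpr ⟨m, h1, h2⟩⟩

def prodCNF (g : CNF T N) (δ : Q → T → Q → Prop) (S : N × Q × Q) : CNF T (N × Q × Q) where
  start := S
  binRule X Y Z := g.binRule X.1 Y.1 Z.1 ∧ Y.2.1 = X.2.1 ∧ Z.2.2 = X.2.2 ∧ Z.2.1 = Y.2.2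
  termRule X a := g.termRule X.1 a ∧ δ X.2.1 a X.2.2

lemma prod_wf_proj {g : CNF T N} {δ : Q → T → Q → Prop} {S : N × Q × Q}
    (t : DTree T (N × Q × Q)) (h : t.wf (prodCNF g δ S)) :
    (mapN Prod.fst t).wf g ∧ GWord δ t.rootN.2.1 t.yield t.rootN.2.2 := by
  induction t with
  | leaf X a =>
    exact ⟨h.1, ⟨X.2.2, h.2, rfl⟩⟩
  | node X l r ihl ihr =>
    obtain ⟨⟨hb, h1, h2, h3⟩, hl, hr⟩ := h
    obtain ⟨hwl, hgl⟩ := ihl hl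
    obtain ⟨hwr, hgr⟩ := ihr hr
    refine ⟨⟨?_, hwl, hwr⟩, ?_⟩
    · simpa using hb
    · show GWord δ X.2.1 (l.yield ++ r.yield) X.2.2
      refine gword_append.mpr ⟨l.rootN.2.2, ?_, ?_⟩
      · rw [← h1]; exact hgl
      · rw [← h2]; rw [h3] at hgr; exact hgr

lemma prod_exists {g : CNF T N} {δ : Q → T → Q → Prop} {S : N × Q × Q}
    (t : DTree T N) (h : t.wf g) :
    ∀ {i j : Q}, GWord δ i t.yield j →
    ∃ t' : DTree T (N × Q × Q), t'.wf (prodCNF g δ S) ∧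
      t'.rootN = (t.rootN, i, j) ∧ t'.yield = t.yield := by
  induction t with
  | leaf A a =>
    intro i j hw
    obtain ⟨kk, hk, hkj⟩ := hw
    have hkj' : kk = j := hkj
    subst hkj'
    exact ⟨DTree.leaf (A, i, kk) a, ⟨h, hk⟩, rfl, rfl⟩
  | node A l r ihl ihr =>
    intro i j hw
    obtain ⟨m, hwl, hwr⟩ := gword_append.mp hw
    obtain ⟨tl, hwfl, hrl, hyl⟩ := ihl h.2.1 hwl
    obtain ⟨tr, hwfr, hrr, hyr⟩ := ihr h.2.2 hwr
    refine ⟨DTree.node (A, i, j) tl tr, ⟨?_, hwfl, hwfr⟩, rfl, ?_⟩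
    · rw [hrl, hrr]
      exact ⟨h.1, rfl, rfl, rfl⟩
    · show tl.yield ++ tr.yield = l.yield ++ r.yield
      rw [hyl, hyr]

end Product
/-- Rational index of a `k`-bounded-oscillation language:
if every parse tree of the CNF grammar `g` has oscillation at most `k`, then
`ρ_{L(g)}(n) = O(|N|^{2k} · n^{4k})`. -/
theorem rational_index_bounded_oscillation {T N : Type} [Fintype N]
    (k : ℕ) (g : CNF T N) (hosc : ∀ t : DTree T N, t.wf g → t.OscLe k) :
    ∃ C : ℕ, ∀ (Q : Type) [Fintype Q] (δ : Q → T → Q → Prop) (I F : Set Q),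
      (g.Lang ∩ NfaLang δ I F).Nonempty →
      ∃ w ∈ g.Lang ∩ NfaLang δ I F,
        w.length ≤ C * (Fintype.card N) ^ (2 * k) * (Fintype.card Q) ^ (4 * k) := by
  refine ⟨1, ?_⟩
  intro Q _ δ I F hne
  obtain ⟨w0, hw0L, hw0K⟩ := hne
  obtain ⟨t0, hwf0, hroot0, hyield0⟩ := hw0L
  obtain ⟨i, hi, j, hj, hrun⟩ := hw0K
  have hrun' : GWord δ i t0.yield j := by rw [hyield0]; exact hrun
  obtain ⟨t1, hwf1, hroot1, hyield1⟩ :=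
    prod_exists (S := (g.start, i, j)) (δ := δ) t0 hwf0 hrun'
  obtain ⟨t2, hwf2, hroot2, hylen2, hht2⟩ := shrink _ (tsize t1) t1 le_rfl hwf1
  obtain ⟨hproj, hgw⟩ := prod_wf_proj t2 hwf2
  -- dimension bound
  have hdim : t2.dim ≤ 2 * k := by
    have h1 := dim_le_of_oscLe (hosc _ hproj)
    rwa [dim_mapN] at h1
  -- cardinality bound
  have hcardpos : 1 ≤ Fintype.card (N × Q × Q) :=
    Fintype.card_pos_iff.mpr ⟨t2.rootN⟩
  have hlen : t2.yield.length ≤ (Fintype.card (N × Q × Q)) ^ (2 * k) := by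
    calc t2.yield.length ≤ (t2.height + 1) ^ t2.dim := yield_le_pow t2
      _ ≤ (Fintype.card (N × Q × Q)) ^ t2.dim := Nat.pow_le_pow_left hht2 _
      _ ≤ (Fintype.card (N × Q × Q)) ^ (2 * k) := Nat.pow_le_pow_right hcardpos hdim
  have hcard : (Fintype.card (N × Q × Q)) ^ (2 * k) =
      (Fintype.card N) ^ (2 * k) * (Fintype.card Q) ^ (4 * k) := by
    rw [Fintype.card_prod, Fintype.card_prod, mul_pow]
    congr 1
    rw [← pow_two (Fintype.card Q), ← pow_mul]
    congr 1
    omega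
  refine ⟨t2.yield, ⟨?_, ?_⟩, ?_⟩
  · refine ⟨mapN Prod.fst t2, hproj, ?_, by rw [yield_mapN]⟩
    rw [rootN_mapN, hroot2, hroot1]; exact hroot0
  · refine ⟨i, hi, j, hj, ?_⟩
    have := hgw
    rw [hroot2, hroot1] at this
    exact this
  · rw [one_mul, ← hcard]
    exact hlen
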